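/- Let $e$ be a unit vector in $\mathbb{R}^d$ and $A_1, A_2$ two real symmetric positive definite $d \times d$ matrices with $A_2 - A_1$ positive definite. Then for every nonzero vector $\xi$ orthogonal to $e$, one has $\langle A_2 e, e\rangle \langle A_2 \xi, \xi\rangle - \langle A_2 e, \xi\rangle^2 > \langle A_1 e, e\rangle \langle A_1 \xi, \xi\rangle - \langle A_1 e, \xi\rangle^2$. -/

import Mathlib

/-!
`⟨A e, e⟩⟨A ξ, ξ⟩ - ⟨A e, ξ⟩²` is the determinant of the Gram matrix of `e, ξ` with respect to
the form of `A`; for positive definite `A` and independent `e, ξ` this Gram matrix is positive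
definite (strict Cauchy–Schwarz). The Gram matrix of `A₂` is the sum of those of `A₁` and
`A₂ - A₁`, and the determinant is strictly superadditive on positive definite `2 × 2` matrices.
-/

open Matrix

namespace Matrix

variable {n : Type*} [Fintype n]

lemma PosDef.mulVec_dotProduct_self_pos {A : Matrix n n ℝ} (hA : A.PosDef) {x : n → ℝ}
    (hx : x ≠ 0) : 0 < A *ᵥ x ⬝ᵥ x := by
  simpa [dotProduct_comm] using hA.dotProduct_mulVec_pos hx

lemma IsHermitian.mulVec_dotProduct_comm {A : Matrix n n ℝ} (hA : A.IsHermitian)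
    (x y : n → ℝ) : A *ᵥ x ⬝ᵥ y = A *ᵥ y ⬝ᵥ x := by
  have hT : Aᵀ = A := hA
  rw [dotProduct_comm, dotProduct_mulVec, ← mulVec_transpose, hT]

lemma PosDef.sq_mulVec_dotProduct_lt {A : Matrix n n ℝ} (hA : A.PosDef) {x y : n → ℝ}
    (hxy : LinearIndependent ℝ ![x, y]) :
    (A *ᵥ x ⬝ᵥ y) ^ 2 < (A *ᵥ x ⬝ᵥ x) * (A *ᵥ y ⬝ᵥ y) := by
  set a := A *ᵥ x ⬝ᵥ x
  set b := A *ᵥ y ⬝ᵥ y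
  set c := A *ᵥ x ⬝ᵥ y
  have hb : 0 < b := hA.mulVec_dotProduct_self_pos (by simpa using hxy.ne_zero 1)
  have hw : b • x + (-c) • y ≠ 0 := fun h => hb.ne' (LinearIndependent.pair_iff.mp hxy _ _ h).1
  -- the form evaluated at `b x - c y` equals `b (a b - c²)`
  have hq := hA.mulVec_dotProduct_self_pos hw
  simp only [mulVec_add, mulVec_smul, add_dotProduct, dotProduct_add, smul_dotProduct,
    dotProduct_smul, smul_eq_mul, hA.1.mulVec_dotProduct_comm y x] at hq
  nlinarith

end Matrix

lemma linearIndependent_pair_of_dotProduct_eq_zero {n : Type*} [Fintype n] {x y : n → ℝ}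
    (hx : x ⬝ᵥ x ≠ 0) (hy : y ≠ 0) (hxy : y ⬝ᵥ x = 0) : LinearIndependent ℝ ![x, y] := by
  refine LinearIndependent.pair_iff.mpr fun s t h => ?_
  have hs : s = 0 := by
    simpa [add_dotProduct, hx, hxy] using congrArg (· ⬝ᵥ x) h
  subst hs
  exact ⟨rfl, (smul_eq_zero.mp (by simpa using h)).resolve_right hy⟩

lemma sub_sq_lt_add_mul_add_sub_sq {a b c p q r : ℝ} (ha : 0 < a) (hc : c ^ 2 < a * b)
    (hp : 0 < p) (hr : r ^ 2 < p * q) :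
    a * b - c ^ 2 < (a + p) * (b + q) - (c + r) ^ 2 := by
  have hb : 0 < b := pos_of_mul_pos_right ((sq_nonneg c).trans_lt hc) ha.le
  have hq : 0 < q := pos_of_mul_pos_right ((sq_nonneg r).trans_lt hr) hp.le
  -- AM–GM bounds the cross term: `(2 c r)² < 4 a b p q ≤ (a q + b p)²`
  have hcross : 2 * (c * r) < a * q + b * p := by
    refine abs_lt_of_sq_lt_sq' ?_ (by positivity) |>.2
    nlinarith [sq_nonneg (a * q - b * p), mul_lt_mul'' hc hr (sq_nonneg c) (sq_nonneg r)]
  nlinarith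

theorem stmt0_general {d : ℕ} (e : Fin d → ℝ) (he : e ⬝ᵥ e = 1)
    (A1 A2 : Matrix (Fin d) (Fin d) ℝ)
    (hA1 : A1.PosDef) (hdiff : (A2 - A1).PosDef) :
    ∀ ξ : Fin d → ℝ, ξ ≠ 0 → ξ ⬝ᵥ e = 0 →
      (A1.mulVec e ⬝ᵥ e) * (A1.mulVec ξ ⬝ᵥ ξ) - (A1.mulVec e ⬝ᵥ ξ) ^ 2 <
      (A2.mulVec e ⬝ᵥ e) * (A2.mulVec ξ ⬝ᵥ ξ) - (A2.mulVec e ⬝ᵥ ξ) ^ 2 := by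
  intro ξ hξ horth
  have he0 : e ≠ 0 := by rintro rfl; simp at he
  have hind := linearIndependent_pair_of_dotProduct_eq_zero (by simp [he]) hξ horth
  have hsplit : ∀ x y, A2 *ᵥ x ⬝ᵥ y = A1 *ᵥ x ⬝ᵥ y + (A2 - A1) *ᵥ x ⬝ᵥ y := fun x y => by
    rw [sub_mulVec, sub_dotProduct, add_sub_cancel]
  rw [hsplit, hsplit, hsplit]
  exact sub_sq_lt_add_mul_add_sub_sq (hA1.mulVec_dotProduct_self_pos he0)
    (hA1.sq_mulVec_dotProduct_lt hind) (hdiff.mulVec_dotProduct_self_pos he0)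
    (hdiff.sq_mulVec_dotProduct_lt hind)

theorem stmt0 {d : ℕ} (hd : 2 ≤ d) (e : Fin d → ℝ) (he : e ⬝ᵥ e = 1)
    (A1 A2 : Matrix (Fin d) (Fin d) ℝ)
    (hA1 : A1.PosDef) (hA2 : A2.PosDef) (hdiff : (A2 - A1).PosDef) :
    ∀ ξ : Fin d → ℝ, ξ ≠ 0 → ξ ⬝ᵥ e = 0 →
      (A1.mulVec e ⬝ᵥ e) * (A1.mulVec ξ ⬝ᵥ ξ) - (A1.mulVec e ⬝ᵥ ξ) ^ 2 <
      (A2.mulVec e ⬝ᵥ e) * (A2.mulVec ξ ⬝ᵥ ξ) - (A2.mulVec e ⬝ᵥ ξ) ^ 2 :=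
  stmt0_general e he A1 A2 hA1 hdiff
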